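/- arXiv:2403.08177 — 5 statements merged into one kernel-verified Lean document; each statement's English description precedes it below -/
import Mathlib

section
/- Let A = S₁ C S₂⁻¹ where S₁, S₂ are 3×3 diagonal matrices with positive diagonal entries and C is a 3×3 real matrix with C Cᵀ = I₃. Then A₀ s₂ = 0, where s₂ is the (entrywise positive, hence nonzero) vector of squared diagonal entries of S₂; consequently the rank of A₀ is at most 2. Moreover A_I s₂ = s₁. -/
/-!
Writing `D₁ = diagonal s₁`, `D₂ = diagonal s₂`, the orthogonality `C Cᵀ = 1` gives
`A D₂² Aᵀ = D₁ C D₂⁻¹ D₂² D₂⁻¹ Cᵀ D₁ = D₁²`. The `i`-th entry of `A₀ s₂` is the off-diagonal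
entry `(i, i + 1)` of `A D₂² Aᵀ`, hence zero, and the `i`-th entry of `A_I s₂` is its diagonal
entry `(i, i)`, namely `s₁ i ²`. Since `s₂` is a nonzero vector in the kernel of `A₀`,
rank–nullity gives `rank A₀ ≤ 2`.
-/

/-- `A_I`: the matrix of squared entries of `A`. -/
def matAI (A : Matrix (Fin 3) (Fin 3) ℝ) : Matrix (Fin 3) (Fin 3) ℝ :=
  Matrix.of fun i j => (A i j) ^ 2

/-- `A₀`: the matrix with `(A₀)_{1j} = a_{1j} a_{2j}`, `(A₀)_{2j} = a_{2j} a_{3j}`,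
`(A₀)_{3j} = a_{3j} a_{1j}` (cyclic products of consecutive rows). -/
def matA0 (A : Matrix (Fin 3) (Fin 3) ℝ) : Matrix (Fin 3) (Fin 3) ℝ :=
  Matrix.of fun i j => A i j * A (i + 1) j

namespace Matrix

variable {m n K : Type*} [Fintype n]

theorem mul_diagonal_mul_transpose_apply [DecidableEq n] [CommSemiring K] (A B : Matrix m n K)
    (v : n → K) (i k : m) : (A * diagonal v * Bᵀ) i k = ∑ j, A i j * B k j * v j := by
  rw [mul_apply]
  exact Finset.sum_congr rfl fun j _ => by rw [mul_diagonal, transpose_apply]; ring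

theorem rank_lt_card_of_mulVec_eq_zero [Field K] {M : Matrix m n K} {v : n → K} (hv : v ≠ 0)
    (hMv : M *ᵥ v = 0) : M.rank < Fintype.card n := by
  have hker : 0 < Module.finrank K (LinearMap.ker M.mulVecLin) :=
    Module.finrank_pos_iff_exists_ne_zero.mpr ⟨⟨v, hMv⟩, fun h => hv (congrArg Subtype.val h)⟩
  have := LinearMap.finrank_range_add_finrank_ker M.mulVecLin
  rw [Module.finrank_fintype_fun_eq_card] at this
  rw [rank]
  omega

theorem mul_diagonal_sq_mul_transpose_eq_diagonal_sq [DecidableEq n] [Field K] {d₁ d₂ : n → K}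
    (hd₂ : ∀ i, d₂ i ≠ 0) {C : Matrix n n K} (hC : C * Cᵀ = 1) {A : Matrix n n K}
    (hA : A = diagonal d₁ * C * (diagonal d₂)⁻¹) :
    A * diagonal (fun i => d₂ i ^ 2) * Aᵀ = diagonal (fun i => d₁ i ^ 2) := by
  have hinv : (diagonal d₂)⁻¹ = diagonal d₂⁻¹ := inv_eq_right_inv <| by
    rw [diagonal_mul_diagonal', ← diagonal_one]
    exact congrArg diagonal (funext fun i => mul_inv_cancel₀ (hd₂ i))
  have hcancel :
      diagonal d₂⁻¹ * diagonal (fun i => d₂ i ^ 2) * diagonal d₂⁻¹ = (1 : Matrix n n K) := by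
    rw [diagonal_mul_diagonal', diagonal_mul_diagonal', ← diagonal_one]
    congr 1
    funext i
    simp only [Pi.inv_apply]
    field_simp [hd₂ i]
  calc A * diagonal (fun i => d₂ i ^ 2) * Aᵀ
      = diagonal d₁ * C * (diagonal d₂⁻¹ * diagonal (fun i => d₂ i ^ 2) * diagonal d₂⁻¹) * Cᵀ
          * diagonal d₁ := by
        simp only [hA, hinv, transpose_mul, diagonal_transpose, Matrix.mul_assoc]
    _ = diagonal d₁ * (C * Cᵀ) * diagonal d₁ := by
        rw [hcancel, Matrix.mul_one, Matrix.mul_assoc (diagonal d₁) C Cᵀ]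
    _ = diagonal (fun i => d₁ i ^ 2) := by
        rw [hC, Matrix.mul_one, diagonal_mul_diagonal']
        simp only [sq]

end Matrix

open Matrix

theorem matA0_mulVec_apply (A : Matrix (Fin 3) (Fin 3) ℝ) (v : Fin 3 → ℝ) (i : Fin 3) :
    (matA0 A *ᵥ v) i = (A * diagonal v * Aᵀ) i (i + 1) := by
  simp [mul_diagonal_mul_transpose_apply, mulVec, dotProduct, matA0]

theorem matAI_mulVec_apply (A : Matrix (Fin 3) (Fin 3) ℝ) (v : Fin 3 → ℝ) (i : Fin 3) :
    (matAI A *ᵥ v) i = (A * diagonal v * Aᵀ) i i := by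
  simp [mul_diagonal_mul_transpose_apply, mulVec, dotProduct, matAI, sq]

theorem stmt7_general (s₁ s₂ : Fin 3 → ℝ)
    (h₂ : ∀ i, 0 < s₂ i)
    (C : Matrix (Fin 3) (Fin 3) ℝ) (hC : C * C.transpose = 1)
    (A : Matrix (Fin 3) (Fin 3) ℝ)
    (hA : A = Matrix.diagonal s₁ * C * (Matrix.diagonal s₂)⁻¹) :
    (matA0 A).mulVec (fun i => (s₂ i) ^ 2) = 0 ∧
    (matA0 A).rank ≤ 2 ∧
    (matAI A).mulVec (fun i => (s₂ i) ^ 2) = (fun i => (s₁ i) ^ 2) := by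
  have hgram : A * diagonal (fun i => s₂ i ^ 2) * Aᵀ = diagonal (fun i => s₁ i ^ 2) :=
    mul_diagonal_sq_mul_transpose_eq_diagonal_sq (fun i => (h₂ i).ne') hC hA
  have hA0 : matA0 A *ᵥ (fun i => s₂ i ^ 2) = 0 := by
    funext i
    have hne : i ≠ i + 1 := by fin_cases i <;> decide
    rw [matA0_mulVec_apply, hgram, diagonal_apply_ne _ hne, Pi.zero_apply]
  have hs₂ : (fun i => s₂ i ^ 2) ≠ 0 := fun h => (pow_pos (h₂ 0) 2).ne' (congrFun h 0)
  refine ⟨hA0, ?_, ?_⟩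
  · have := rank_lt_card_of_mulVec_eq_zero hs₂ hA0
    rw [Fintype.card_fin] at this
    omega
  · funext i
    rw [matAI_mulVec_apply, hgram, diagonal_apply_eq]

/-- for `A = S₁ C S₂⁻¹` with `C Cᵀ = I₃`, we have `A₀ s₂ = 0` (hence
`rank A₀ ≤ 2`, since `s₂` is entrywise positive and so nonzero), and `A_I s₂ = s₁`. -/
theorem stmt7 (s₁ s₂ : Fin 3 → ℝ)
    (h₁ : ∀ i, 0 < s₁ i) (h₂ : ∀ i, 0 < s₂ i)
    (C : Matrix (Fin 3) (Fin 3) ℝ) (hC : C * C.transpose = 1)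
    (A : Matrix (Fin 3) (Fin 3) ℝ)
    (hA : A = Matrix.diagonal s₁ * C * (Matrix.diagonal s₂)⁻¹) :
    (matA0 A).mulVec (fun i => (s₂ i) ^ 2) = 0 ∧
    (matA0 A).rank ≤ 2 ∧
    (matAI A).mulVec (fun i => (s₂ i) ^ 2) = (fun i => (s₁ i) ^ 2) :=
  stmt7_general s₁ s₂ h₂ C hC A hA
end

section
/- Let A = S₁ C S₂⁻¹ = S₁' C' S₂'⁻¹, where S₁, S₂, S₁', S₂' are 3×3 diagonal matrices with positive diagonal entries and C, C' are 3×3 real matrices with C Cᵀ = I₃ and C' C'ᵀ = I₃. If the kernel of the matrix A₀ is one-dimensional, then there exists a real number λ > 0 such that S₁' = λ S₁, S₂' = λ S₂, and C' = C. (In other words, when rank A₀ = 2, the extrinsic rotation is uniquely determined and the six scale factors are determined up to a common global scale.) -/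
namespace Matrix

variable {n K : Type*} [Fintype n] [DecidableEq n]

theorem inv_diagonal_of_ne_zero [Field K] {e : n → K} (he : ∀ j, e j ≠ 0) :
    (diagonal e)⁻¹ = diagonal e⁻¹ :=
  inv_eq_right_inv <| by simp [diagonal_mul_diagonal, he]

theorem diagonal_mul_mul_inv_diagonal_apply [Field K] (d : n → K) {e : n → K}
    (he : ∀ j, e j ≠ 0) (M : Matrix n n K) (i j : n) :
    (diagonal d * M * (diagonal e)⁻¹) i j = d i * M i j / e j := by
  simp [inv_diagonal_of_ne_zero he, div_eq_mul_inv]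

theorem eq_one_of_diagonal_mul_mul_transpose_eq_one [Field K] [LinearOrder K]
    [IsStrictOrderedRing K] {d : n → K} {C : Matrix n n K} (hd : ∀ i, 0 < d i) (hC : C * Cᵀ = 1)
    (hdC : (diagonal d * C) * (diagonal d * C)ᵀ = 1) : d = 1 := by
  have hsq : d * d = 1 := by
    rwa [transpose_mul, diagonal_transpose, mul_assoc, ← mul_assoc C, hC, one_mul,
      diagonal_mul_diagonal, diagonal_eq_one] at hdC
  funext i
  have hi := congrFun hsq i
  simp only [Pi.mul_apply, Pi.one_apply] at hi ⊢
  nlinarith [hd i]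

theorem eq_diagonal_mul_of_diagonal_mul_mul_inv_diagonal_eq [Field K] {a a' b : n → K} {t : K}
    (ha' : ∀ i, a' i ≠ 0) (hb : ∀ j, b j ≠ 0) (ht : t ≠ 0) {C C' : Matrix n n K}
    (h : diagonal a' * C' * (diagonal (t • b))⁻¹ = diagonal a * C * (diagonal b)⁻¹) :
    C' = diagonal (fun i => t * a i / a' i) * C := by
  have htb : ∀ j, (t • b) j ≠ 0 := fun j => smul_ne_zero ht (hb j)
  ext i j
  have hij := congrFun₂ h i j
  rw [diagonal_mul_mul_inv_diagonal_apply _ htb, diagonal_mul_mul_inv_diagonal_apply _ hb,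
    Pi.smul_apply, smul_eq_mul] at hij
  rw [diagonal_mul]
  field_simp [ha' i, hb j] at hij ⊢
  linear_combination hij

end Matrix

open Matrix

theorem Submodule.exists_smul_eq_of_finrank_eq_one {K V : Type*} [DivisionRing K] [AddCommGroup V]
    [Module K V] {p : Submodule K V} (hp : Module.finrank K p = 1) {v w : V} (hv : v ∈ p)
    (hw : w ∈ p) (hv0 : v ≠ 0) : ∃ c : K, c • v = w := by
  obtain ⟨c, hc⟩ :=
    (finrank_eq_one_iff_of_nonzero' (⟨v, hv⟩ : p) (by simpa using hv0)).1 hp ⟨w, hw⟩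
  exact ⟨c, congrArg Subtype.val hc⟩

theorem exists_pos_smul_eq_of_smul_sq_eq_sq {ι : Type*} [Nonempty ι] {x y : ι → ℝ}
    (hx : ∀ i, 0 < x i) (hy : ∀ i, 0 < y i) {c : ℝ} (h : c • x ^ 2 = y ^ 2) :
    ∃ t : ℝ, 0 < t ∧ y = t • x := by
  have hc : 0 < c := by
    obtain ⟨i⟩ := ‹Nonempty ι›
    have hi := congrFun h i
    simp only [Pi.smul_apply, Pi.pow_apply, smul_eq_mul] at hi
    exact pos_of_mul_pos_left (hi ▸ pow_pos (hy i) 2) (sq_nonneg (x i))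
  refine ⟨√c, Real.sqrt_pos.2 hc, funext fun i => ?_⟩
  have hi := congrFun h i
  simp only [Pi.smul_apply, Pi.pow_apply, smul_eq_mul] at hi ⊢
  rw [← Real.sqrt_sq (hy i).le, ← hi, Real.sqrt_mul hc.le, Real.sqrt_sq (hx i).le]

theorem matA0_mulVec_sq_eq_zero {s₁ s₂ : Fin 3 → ℝ} (hs₂ : ∀ j, s₂ j ≠ 0)
    {C : Matrix (Fin 3) (Fin 3) ℝ} (hC : C * Cᵀ = 1) :
    matA0 (diagonal s₁ * C * (diagonal s₂)⁻¹) *ᵥ s₂ ^ 2 = 0 := by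
  funext i
  have horth : ∑ j, C i j * C (i + 1) j = 0 := by
    have hi : i ≠ i + 1 := by revert i; decide
    simpa [mul_apply, one_apply, hi] using congrFun₂ hC i (i + 1)
  calc ∑ j, matA0 (diagonal s₁ * C * (diagonal s₂)⁻¹) i j * (s₂ ^ 2) j
      = ∑ j, s₁ i * s₁ (i + 1) * (C i j * C (i + 1) j) := by
        refine Finset.sum_congr rfl fun j _ => ?_
        simp only [matA0, of_apply, diagonal_mul_mul_inv_diagonal_apply _ hs₂, Pi.pow_apply]
        field_simp [hs₂ j]
    _ = 0 := by rw [← Finset.mul_sum, horth, mul_zero]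

/-- if `A = S₁ C S₂⁻¹ = S₁' C' S₂'⁻¹` with positive diagonal scale matrices
and `C Cᵀ = C' C'ᵀ = I₃`, and the kernel of `A₀` is one-dimensional, then there is a
`λ > 0` with `S₁' = λ S₁`, `S₂' = λ S₂` and `C' = C`. -/
theorem stmt8 (s₁ s₂ s₁' s₂' : Fin 3 → ℝ)
    (h₁ : ∀ i, 0 < s₁ i) (h₂ : ∀ i, 0 < s₂ i)
    (h₁' : ∀ i, 0 < s₁' i) (h₂' : ∀ i, 0 < s₂' i)
    (C C' : Matrix (Fin 3) (Fin 3) ℝ)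
    (hC : C * C.transpose = 1) (hC' : C' * C'.transpose = 1)
    (A : Matrix (Fin 3) (Fin 3) ℝ)
    (hA : A = Matrix.diagonal s₁ * C * (Matrix.diagonal s₂)⁻¹)
    (hA' : A = Matrix.diagonal s₁' * C' * (Matrix.diagonal s₂')⁻¹)
    (hker : Module.finrank ℝ (LinearMap.ker (matA0 A).mulVecLin) = 1) :
    ∃ lam : ℝ, 0 < lam ∧
      Matrix.diagonal s₁' = lam • Matrix.diagonal s₁ ∧
      Matrix.diagonal s₂' = lam • Matrix.diagonal s₂ ∧
      C' = C := by
  have hs₂ : ∀ j, s₂ j ≠ 0 := fun j => (h₂ j).ne'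
  have hs₂' : ∀ j, s₂' j ≠ 0 := fun j => (h₂' j).ne'
  have hmem : s₂ ^ 2 ∈ LinearMap.ker (matA0 A).mulVecLin := by
    rw [LinearMap.mem_ker, mulVecLin_apply, hA, matA0_mulVec_sq_eq_zero hs₂ hC]
  have hmem' : s₂' ^ 2 ∈ LinearMap.ker (matA0 A).mulVecLin := by
    rw [LinearMap.mem_ker, mulVecLin_apply, hA', matA0_mulVec_sq_eq_zero hs₂' hC']
  have hne : s₂ ^ 2 ≠ 0 := fun h => hs₂ 0 (pow_eq_zero_iff two_ne_zero |>.1 (congrFun h 0))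
  obtain ⟨c, hc⟩ := Submodule.exists_smul_eq_of_finrank_eq_one hker hmem hmem' hne
  obtain ⟨t, ht, rfl⟩ := exists_pos_smul_eq_of_smul_sq_eq_sq h₂ h₂' hc
  have hC'_eq := eq_diagonal_mul_of_diagonal_mul_mul_inv_diagonal_eq (fun i => (h₁' i).ne')
    hs₂ ht.ne' (hA'.symm.trans hA)
  have hd := eq_one_of_diagonal_mul_mul_transpose_eq_one
    (fun i => div_pos (mul_pos ht (h₁ i)) (h₁' i)) hC (hC'_eq ▸ hC')
  have hs₁' : s₁' = t • s₁ := funext fun i =>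
    ((div_eq_one_iff_eq (h₁' i).ne').1 (congrFun hd i)).symm
  refine ⟨t, ht, by rw [hs₁', diagonal_smul], diagonal_smul .., ?_⟩
  rw [hC'_eq, hd, Pi.one_def, diagonal_one, one_mul]
end

section
/- Let C be a 3×3 signed permutation matrix, let S₁, S₂ be 3×3 diagonal matrices with positive diagonal entries, and let Λ be any 3×3 diagonal matrix with positive diagonal entries. Then Cᵀ Λ C is a diagonal matrix with positive diagonal entries, and S₁ C S₂⁻¹ = (Λ S₁) C ((Cᵀ Λ C) S₂)⁻¹. (Hence when the gyroscopes' axes are pairwise parallel, the factorization of A into scale factors and a rotation admits a three-parameter family of solutions, and only the pairwise ratios of the scale factors are determined.) -/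
/-- A signed permutation matrix: exactly one nonzero entry in each row and each column,
each entry being `0`, `1` or `-1`. -/
def IsSignedPerm (C : Matrix (Fin 3) (Fin 3) ℝ) : Prop :=
  (∀ i, ∃! j, C i j ≠ 0) ∧ (∀ j, ∃! i, C i j ≠ 0) ∧
  (∀ i j, C i j = 0 ∨ C i j = 1 ∨ C i j = -1)

/-! Write `C = E P` with `E = diagonal ε`, `ε i = ±1`, and `P` the matrix of a permutation `σ`.
Then `D := Cᵀ Λ C = diagonal (l ∘ σ⁻¹)` and `C D = Λ C`. Since diagonal matrices commute,
`(Λ S₁) C (D S₂)⁻¹ = S₁ (Λ C) D⁻¹ S₂⁻¹ = S₁ (C D) D⁻¹ S₂⁻¹ = S₁ C S₂⁻¹`. -/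

open Matrix

section SignedPermMatrix

variable {n K : Type*} [Fintype n] [DecidableEq n] [CommRing K]

theorem transpose_diagonal_mul_permMatrix_mul_diagonal_mul (σ : Equiv.Perm n) {ε : n → K}
    (hε : ∀ i, ε i * ε i = 1) (l : n → K) :
    (diagonal ε * σ.permMatrix K)ᵀ * diagonal l * (diagonal ε * σ.permMatrix K) =
      diagonal (l ∘ σ.symm) := by
  rw [transpose_mul, transpose_permMatrix, diagonal_transpose, mul_assoc, mul_assoc,
    ← mul_assoc (diagonal l), ← mul_assoc (diagonal ε), diagonal_mul_diagonal,
    diagonal_mul_diagonal]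
  have hεl : (fun i => ε i * (l i * ε i)) = l :=
    funext fun i => by rw [mul_left_comm, hε, mul_one]
  rw [hεl, PEquiv.toMatrix_toPEquiv_mul, PEquiv.mul_toMatrix_toPEquiv, submatrix_submatrix]
  exact submatrix_diagonal_equiv l σ.symm

theorem diagonal_mul_permMatrix_mul_diagonal (σ : Equiv.Perm n) (ε l : n → K) :
    diagonal ε * σ.permMatrix K * diagonal (l ∘ σ.symm) =
      diagonal l * (diagonal ε * σ.permMatrix K) := by
  ext i j
  simp only [mul_diagonal, diagonal_mul, PEquiv.toMatrix_apply, Equiv.toPEquiv_apply,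
    Option.mem_def, Option.some.injEq, mul_ite, mul_one, mul_zero, Function.comp_apply, ite_mul,
    zero_mul]
  split_ifs with h
  · subst h
    rw [Equiv.symm_apply_apply, mul_comm]
  · rfl

theorem diagonal_mul_diagonal_mul_mul_inv {C : Matrix n n K} {l d : n → K}
    (hC : C * diagonal d = diagonal l * C) (hd : IsUnit d) (s₁ s₂ : n → K) :
    diagonal l * diagonal s₁ * C * (diagonal d * diagonal s₂)⁻¹ =
      diagonal s₁ * C * (diagonal s₂)⁻¹ := by
  have hdet : IsUnit (diagonal d).det := (isUnit_iff_isUnit_det _).mp (isUnit_diagonal.mpr hd)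
  rw [(commute_diagonal l s₁).eq, (commute_diagonal d s₂).eq, Matrix.mul_inv_rev,
    mul_assoc _ _ C, ← hC, ← mul_assoc, ← mul_assoc, mul_nonsing_inv_cancel_right _ _ hdet]

end SignedPermMatrix

theorem IsSignedPerm.exists_eq_diagonal_mul_permMatrix {C : Matrix (Fin 3) (Fin 3) ℝ}
    (hC : IsSignedPerm C) :
    ∃ (σ : Equiv.Perm (Fin 3)) (ε : Fin 3 → ℝ), (∀ i, ε i * ε i = 1) ∧
      C = diagonal ε * σ.permMatrix ℝ := by
  obtain ⟨hrow, hcol, hval⟩ := hC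
  choose σ hσ using hrow
  have hinj : Function.Injective σ := fun i i' h =>
    (hcol (σ i)).unique (hσ i).1 (h ▸ (hσ i').1)
  refine ⟨Equiv.ofBijective σ hinj.bijective_of_finite, fun i => C i (σ i), fun i => ?_, ?_⟩
  · dsimp only
    rcases hval i (σ i) with h | h | h
    · exact absurd h (hσ i).1
    · rw [h]; norm_num
    · rw [h]; norm_num
  · ext i j
    simp only [diagonal_mul, PEquiv.toMatrix_apply, Equiv.toPEquiv_apply, Option.mem_def,
      Option.some.injEq, Equiv.ofBijective_apply, mul_ite, mul_one, mul_zero]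
    split_ifs with h
    · rw [h]
    · by_contra hne
      exact h ((hσ i).2 j hne).symm

theorem stmt10_general (C : Matrix (Fin 3) (Fin 3) ℝ) (hC : IsSignedPerm C)
    (s₁ s₂ l : Fin 3 → ℝ)
    (hl : ∀ i, 0 < l i) :
    (∃ d : Fin 3 → ℝ, (∀ i, 0 < d i) ∧
        C.transpose * Matrix.diagonal l * C = Matrix.diagonal d) ∧
    Matrix.diagonal s₁ * C * (Matrix.diagonal s₂)⁻¹ =
      (Matrix.diagonal l * Matrix.diagonal s₁) * C *
        ((C.transpose * Matrix.diagonal l * C) * Matrix.diagonal s₂)⁻¹ := by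
  obtain ⟨σ, ε, hε, rfl⟩ := hC.exists_eq_diagonal_mul_permMatrix
  have hD := transpose_diagonal_mul_permMatrix_mul_diagonal_mul σ hε l
  refine ⟨⟨l ∘ σ.symm, fun j => hl _, hD⟩, ?_⟩
  rw [hD]
  exact (diagonal_mul_diagonal_mul_mul_inv (diagonal_mul_permMatrix_mul_diagonal σ ε l)
    (Pi.isUnit_iff.mpr fun j => (hl _).ne'.isUnit) s₁ s₂).symm

/-- for a signed permutation matrix `C`, positive diagonal `S₁, S₂, Λ`,
the matrix `Cᵀ Λ C` is again positive diagonal and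
`S₁ C S₂⁻¹ = (Λ S₁) C ((Cᵀ Λ C) S₂)⁻¹`. -/
theorem stmt10 (C : Matrix (Fin 3) (Fin 3) ℝ) (hC : IsSignedPerm C)
    (s₁ s₂ l : Fin 3 → ℝ)
    (h₁ : ∀ i, 0 < s₁ i) (h₂ : ∀ i, 0 < s₂ i) (hl : ∀ i, 0 < l i) :
    (∃ d : Fin 3 → ℝ, (∀ i, 0 < d i) ∧
        C.transpose * Matrix.diagonal l * C = Matrix.diagonal d) ∧
    Matrix.diagonal s₁ * C * (Matrix.diagonal s₂)⁻¹ =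
      (Matrix.diagonal l * Matrix.diagonal s₁) * C *
        ((C.transpose * Matrix.diagonal l * C) * Matrix.diagonal s₂)⁻¹ :=
  stmt10_general C hC s₁ s₂ l hl
end

section
/- Let θ ∈ ℝ with cos θ · sin θ ≠ 0, let A = S₁ Rot(e₃, θ) S₂⁻¹ where S₁, S₂ are 3×3 diagonal matrices with positive diagonal entries (¹s_x, ¹s_y, ¹s_z) and (²s_x, ²s_y, ²s_z), and let M be the 3×4 real matrix [[a₁₁², a₁₂², −1, 0], [a₂₁², a₂₂², 0, −1], [a₁₁ a₂₁, a₁₂ a₂₂, 0, 0]] built from the entries a_ij of A. Then M has rank 3, the vector v = (²s_x², ²s_y², ¹s_x², ¹s_y²) ∈ ℝ⁴ satisfies M v = 0, and every vector in the kernel of M is a scalar multiple of v. -/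
/-- The rotation matrix `Rot(e₃, θ)` about the third axis by angle `θ`. -/
noncomputable def Rot3 (θ : ℝ) : Matrix (Fin 3) (Fin 3) ℝ :=
  !![Real.cos θ, -Real.sin θ, 0;
     Real.sin θ,  Real.cos θ, 0;
     0, 0, 1]

/-- for `A = S₁ Rot(e₃, θ) S₂⁻¹` with `cos θ · sin θ ≠ 0`, the `3 × 4`
matrix `M` built from the upper-left `2 × 2` block of `A` has rank `3`, the vector
`v = (²s_x², ²s_y², ¹s_x², ¹s_y²)` lies in its kernel, and the kernel of `M` consists
exactly of the scalar multiples of `v`. -/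
theorem stmt12 (θ : ℝ) (hθ : Real.cos θ * Real.sin θ ≠ 0)
    (s₁ s₂ : Fin 3 → ℝ) (h₁ : ∀ i, 0 < s₁ i) (h₂ : ∀ i, 0 < s₂ i)
    (A : Matrix (Fin 3) (Fin 3) ℝ)
    (hA : A = Matrix.diagonal s₁ * Rot3 θ * (Matrix.diagonal s₂)⁻¹)
    (M : Matrix (Fin 3) (Fin 4) ℝ)
    (hM : M = !![(A 0 0) ^ 2, (A 0 1) ^ 2, -1, 0;
                 (A 1 0) ^ 2, (A 1 1) ^ 2, 0, -1;
                 A 0 0 * A 1 0, A 0 1 * A 1 1, 0, 0])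
    (v : Fin 4 → ℝ)
    (hv : v = ![(s₂ 0) ^ 2, (s₂ 1) ^ 2, (s₁ 0) ^ 2, (s₁ 1) ^ 2]) :
    M.rank = 3 ∧ M.mulVec v = 0 ∧
    (∀ w : Fin 4 → ℝ, M.mulVec w = 0 → ∃ c : ℝ, w = c • v) := by
  have hc : Real.cos θ ≠ 0 := fun h => hθ (by rw [h]; ring)
  have hs : Real.sin θ ≠ 0 := fun h => hθ (by rw [h]; ring)
  have p10 := (h₁ 0).ne'
  have p11 := (h₁ 1).ne'
  have p20 := (h₂ 0).ne'
  have p21 := (h₂ 1).ne'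
  have hpyth := Real.sin_sq_add_cos_sq θ
  have hinv : (Matrix.diagonal s₂)⁻¹ = Matrix.diagonal (fun i => (s₂ i)⁻¹) := by
    apply Matrix.inv_eq_right_inv
    rw [Matrix.diagonal_mul_diagonal]
    convert Matrix.diagonal_one
    exact mul_inv_cancel₀ (h₂ _).ne'
  have hAij : ∀ i j, A i j = s₁ i * Rot3 θ i j * (s₂ j)⁻¹ := by
    intro i j
    rw [hA, hinv, Matrix.mul_diagonal, Matrix.diagonal_mul]
  have ha00 : A 0 0 = s₁ 0 * Real.cos θ * (s₂ 0)⁻¹ := by rw [hAij]; norm_num [Rot3]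
  have ha01 : A 0 1 = -(s₁ 0 * Real.sin θ * (s₂ 1)⁻¹) := by rw [hAij]; norm_num [Rot3]
  have ha10 : A 1 0 = s₁ 1 * Real.sin θ * (s₂ 0)⁻¹ := by rw [hAij]; norm_num [Rot3]
  have ha11 : A 1 1 = s₁ 1 * Real.cos θ * (s₂ 1)⁻¹ := by rw [hAij]; norm_num [Rot3]
  have hMv : M.mulVec v = 0 := by
    funext i
    fin_cases i <;>
      simp [hM, hv, Matrix.mulVec, dotProduct, Fin.sum_univ_four,
        ha00, ha01, ha10, ha11] <;>
      (try field_simp) <;>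
      first
        | linear_combination (s₁ 0 ^ 2) * hpyth
        | linear_combination (s₁ 1 ^ 2) * hpyth
        | linear_combination (s₁ 1 ^ 2 - s₁ 0 ^ 2) * hpyth
        | linear_combination (-(s₁ 0 ^ 2)) * hpyth
        | linear_combination (-(s₁ 1 ^ 2)) * hpyth
        | ring
  have hker : ∀ w : Fin 4 → ℝ, M.mulVec w = 0 → ∃ c : ℝ, w = c • v := by
    intro w hw
    have e0 := congrFun hw 0
    have e1 := congrFun hw 1
    have e2 := congrFun hw 2
    simp only [hM, Matrix.mulVec, dotProduct, Fin.sum_univ_four, ha00, ha01, ha10, ha11,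
      Matrix.cons_val', Matrix.cons_val_zero, Matrix.cons_val_one, Matrix.head_cons,
      Matrix.empty_val', Matrix.cons_val_fin_one, Matrix.head_fin_const, Matrix.cons_val_two,
      Matrix.tail_cons, Matrix.cons_val_three, Pi.zero_apply, Matrix.of_apply] at e0 e1 e2
    field_simp at e0 e1 e2
    have h3 : s₁ 0 * s₁ 1 * Real.cos θ * Real.sin θ ≠ 0 :=
      mul_ne_zero (mul_ne_zero (mul_ne_zero p10 p11) hc) hs
    have key : w 1 * s₂ 0 ^ 2 = w 0 * s₂ 1 ^ 2 := by
      apply mul_left_cancel₀ h3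
      linear_combination -e2
    refine ⟨w 0 / (s₂ 0)^2, ?_⟩
    funext i
    fin_cases i
    · simp [hv]; field_simp
    · simp [hv]; field_simp; linear_combination key
    · simp [hv]; field_simp
      apply mul_left_cancel₀ (pow_ne_zero 2 p21)
      linear_combination -e0 + (s₁ 0 * Real.sin θ)^2 * key + s₁ 0^2 * w 0 * s₂ 1^2 * hpyth
    · simp [hv]; field_simp
      apply mul_left_cancel₀ (pow_ne_zero 2 p21)
      linear_combination -e1 + (s₁ 1 * Real.cos θ)^2 * key + s₁ 1^2 * w 0 * s₂ 1^2 * hpyth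
  have hvne : v ≠ 0 := by
    intro h
    have h0 : v 0 = 0 := by rw [h]; rfl
    rw [hv] at h0
    simp at h0
    exact p20 h0
  have hkerspan : LinearMap.ker M.mulVecLin = Submodule.span ℝ {v} := by
    apply le_antisymm
    · intro x hx
      obtain ⟨c, rfl⟩ := hker x hx
      exact Submodule.smul_mem _ c (Submodule.mem_span_singleton_self v)
    · rw [Submodule.span_singleton_le_iff_mem, LinearMap.mem_ker, Matrix.mulVecLin_apply]
      exact hMv
  have hfr : Module.finrank ℝ (LinearMap.ker M.mulVecLin) = 1 := by
    rw [hkerspan]; exact finrank_span_singleton hvne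
  have hsum := LinearMap.finrank_range_add_finrank_ker M.mulVecLin
  have hdom : Module.finrank ℝ (Fin 4 → ℝ) = 4 := by simp
  have hrank : M.rank = Module.finrank ℝ (LinearMap.range M.mulVecLin) := rfl
  refine ⟨?_, hMv, hker⟩
  rw [hrank]
  omega
end

section
/- Let θ, θ' ∈ ℝ with cos θ · sin θ ≠ 0, and suppose S₁ Rot(e₃, θ) S₂⁻¹ = S₁' Rot(e₃, θ') S₂'⁻¹, where S₁, S₂, S₁', S₂' are 3×3 diagonal matrices with positive diagonal entries. Then Rot(e₃, θ') = Rot(e₃, θ), and there exist real numbers μ > 0 and ν > 0 such that S₁' = Λ S₁ and S₂' = Λ S₂ with Λ = diag(μ, μ, ν). (That is, when exactly one pair of gyroscope axes is parallel, the rotation is uniquely determined, the four scale factors of the non-parallel axes are determined up to one common scale μ, and the two scale factors of the parallel axes are determined up to a second common scale ν.) -/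
open Matrix Real

namespace Matrix

variable {K n : Type*} [Field K] [Fintype n] [DecidableEq n]

theorem inv_diagonal_of_ne_zero_s13 {v : n → K} (hv : ∀ i, v i ≠ 0) :
    (diagonal v)⁻¹ = diagonal v⁻¹ := by
  refine inv_eq_left_inv ?_
  rw [diagonal_mul_diagonal, ← diagonal_one]
  exact congrArg diagonal (funext fun i => inv_mul_cancel₀ (hv i))

theorem diagonal_eq_diagonal_div_mul {s s' : n → K} (hs : ∀ i, s i ≠ 0) :
    diagonal s' = diagonal (s' / s) * diagonal s := by
  rw [diagonal_mul_diagonal]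
  exact congrArg diagonal (funext fun i => (div_mul_cancel₀ (s' i) (hs i)).symm)

theorem mul_diagonal_div_eq_diagonal_div_mul {A B : Matrix n n K} {s₁ s₂ s₁' s₂' : n → K}
    (h₁ : ∀ i, s₁ i ≠ 0) (h₂ : ∀ i, s₂ i ≠ 0) (h₂' : ∀ i, s₂' i ≠ 0)
    (h : diagonal s₁ * A * (diagonal s₂)⁻¹ = diagonal s₁' * B * (diagonal s₂')⁻¹) :
    A * diagonal (s₂' / s₂) = diagonal (s₁' / s₁) * B := by
  ext i j
  have hij := congr_fun₂ h i j
  simp only [inv_diagonal_of_ne_zero_s13 h₂, inv_diagonal_of_ne_zero_s13 h₂', mul_diagonal,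
    diagonal_mul, Pi.inv_apply] at hij
  simp only [mul_diagonal, diagonal_mul, Pi.div_apply]
  field_simp [h₁ i, h₂ j, h₂' j] at hij ⊢
  linear_combination hij

end Matrix

theorem eq_of_cos_mul_eq_mul_cos_of_sin_mul_eq_mul_sin {θ θ' a b : ℝ} (ha : 0 < a) (hb : 0 < b)
    (hcos : cos θ * b = a * cos θ') (hsin : sin θ * b = a * sin θ') : b = a := by
  have hsq : b ^ 2 = a ^ 2 := by
    linear_combination (sin θ * b + a * sin θ') * hsin + (cos θ * b + a * cos θ') * hcos
      - b ^ 2 * sin_sq_add_cos_sq θ + a ^ 2 * sin_sq_add_cos_sq θ'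
  exact (pow_left_inj₀ hb.le ha.le two_ne_zero).mp hsq

-- The hypotheses are the entries of `diag(a₀, a₁) R' = R diag(b₀, b₁)` for the rotation
-- blocks `R = [[c, -s], [s, c]]` and `R' = [[c', -s'], [s', c']]`.
theorem scalings_eq_of_diagonal_mul_rotation_block {c s c' s' a₀ a₁ b₀ b₁ : ℝ}
    (hc : c ≠ 0) (hs : s ≠ 0) (ha₀ : 0 < a₀) (ha₁ : 0 < a₁) (hb₀ : b₀ ≠ 0)
    (h₀₀ : c * b₀ = a₀ * c') (h₁₁ : c * b₁ = a₁ * c')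
    (h₀₁ : s * b₁ = a₀ * s') (h₁₀ : s * b₀ = a₁ * s') :
    a₁ = a₀ ∧ b₁ = b₀ := by
  have e₁ : b₀ * a₁ = b₁ * a₀ :=
    mul_left_cancel₀ hc (by linear_combination a₁ * h₀₀ - a₀ * h₁₁)
  have e₂ : b₁ * a₁ = b₀ * a₀ :=
    mul_left_cancel₀ hs (by linear_combination a₁ * h₀₁ - a₀ * h₁₀)
  have hsq : a₁ ^ 2 = a₀ ^ 2 :=
    mul_left_cancel₀ hb₀ (by linear_combination a₁ * e₁ + a₀ * e₂)
  have ha : a₁ = a₀ := (pow_left_inj₀ ha₁.le ha₀.le two_ne_zero).mp hsq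
  refine ⟨ha, mul_right_cancel₀ ha₀.ne' ?_⟩
  rw [← e₁, ha]

theorem rot3_eq_and_scalings_eq_of_rot3_mul_diagonal {θ θ' : ℝ} {α β : Fin 3 → ℝ}
    (hc : cos θ ≠ 0) (hs : sin θ ≠ 0) (hα : ∀ i, 0 < α i) (hβ : ∀ i, 0 < β i)
    (h : Rot3 θ * diagonal β = diagonal α * Rot3 θ') :
    Rot3 θ' = Rot3 θ ∧ β = α ∧ α = ![α 0, α 0, α 2] := by
  have entry (i j : Fin 3) := congr_fun₂ h i j
  have h₀₀ := entry 0 0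
  have h₀₁ := entry 0 1
  have h₁₀ := entry 1 0
  have h₁₁ := entry 1 1
  have h₂₂ := entry 2 2
  simp only [Rot3, mul_diagonal, diagonal_mul, of_apply, cons_val', cons_val_zero, cons_val_one,
    cons_val_two, empty_val', cons_val_fin_one, head_cons, tail_cons, head_fin_const, neg_mul,
    mul_neg, neg_inj, one_mul, mul_one] at h₀₀ h₀₁ h₁₀ h₁₁ h₂₂
  obtain ⟨hα₁, hβ₁⟩ := scalings_eq_of_diagonal_mul_rotation_block hc hs (hα 0) (hα 1) (hβ 0).ne'
    h₀₀ h₁₁ h₀₁ h₁₀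
  have hβ₀ : β 0 = α 0 :=
    eq_of_cos_mul_eq_mul_cos_of_sin_mul_eq_mul_sin (hα 0) (hβ 0) h₀₀ (hα₁ ▸ h₁₀)
  have hcos : cos θ' = cos θ := mul_left_cancel₀ (hα 0).ne' (by rw [← h₀₀, hβ₀, mul_comm])
  have hsin : sin θ' = sin θ := mul_left_cancel₀ (hα 0).ne' (by rw [← h₀₁, hβ₁, hβ₀, mul_comm])
  refine ⟨by rw [Rot3, Rot3, hcos, hsin], funext fun i => ?_, funext fun i => ?_⟩
  · fin_cases i <;> simp [hβ₀, hβ₁, hα₁, h₂₂]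
  · fin_cases i <;> simp [hα₁]

/-- if `S₁ Rot(e₃, θ) S₂⁻¹ = S₁' Rot(e₃, θ') S₂'⁻¹` with
`cos θ · sin θ ≠ 0` and all scale matrices positive diagonal, then
`Rot(e₃, θ') = Rot(e₃, θ)` and, for some `μ, ν > 0` and `Λ = diag(μ, μ, ν)`,
`S₁' = Λ S₁` and `S₂' = Λ S₂`. -/
theorem stmt13 (θ θ' : ℝ) (hθ : Real.cos θ * Real.sin θ ≠ 0)
    (s₁ s₂ s₁' s₂' : Fin 3 → ℝ)
    (h₁ : ∀ i, 0 < s₁ i) (h₂ : ∀ i, 0 < s₂ i)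
    (h₁' : ∀ i, 0 < s₁' i) (h₂' : ∀ i, 0 < s₂' i)
    (hEq : Matrix.diagonal s₁ * Rot3 θ * (Matrix.diagonal s₂)⁻¹ =
      Matrix.diagonal s₁' * Rot3 θ' * (Matrix.diagonal s₂')⁻¹) :
    Rot3 θ' = Rot3 θ ∧
    ∃ μ ν : ℝ, 0 < μ ∧ 0 < ν ∧
      Matrix.diagonal s₁' = Matrix.diagonal ![μ, μ, ν] * Matrix.diagonal s₁ ∧
      Matrix.diagonal s₂' = Matrix.diagonal ![μ, μ, ν] * Matrix.diagonal s₂ := by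
  have hα (i : Fin 3) : 0 < (s₁' / s₁) i := div_pos (h₁' i) (h₁ i)
  have hβ (i : Fin 3) : 0 < (s₂' / s₂) i := div_pos (h₂' i) (h₂ i)
  have hconj := mul_diagonal_div_eq_diagonal_div_mul (fun i => (h₁ i).ne') (fun i => (h₂ i).ne')
    (fun i => (h₂' i).ne') hEq
  obtain ⟨hrot, hβα, hα_eq⟩ := rot3_eq_and_scalings_eq_of_rot3_mul_diagonal
    (left_ne_zero_of_mul hθ) (right_ne_zero_of_mul hθ) hα hβ hconj
  refine ⟨hrot, _, _, hα 0, hα 2, ?_, ?_⟩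
  · rw [← hα_eq, ← diagonal_eq_diagonal_div_mul fun i => (h₁ i).ne']
  · rw [← hα_eq, ← hβα, ← diagonal_eq_diagonal_div_mul fun i => (h₂ i).ne']
end
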